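/- Let 1 ≤ r ≤ d ≤ n, let L ∈ ℝ^{n×d} have rank d (full column rank), and set K = L Lᵀ. Let γ > 0, τ, τ_z ∈ ℝ, L_Y ∈ ℝ^{n×d_Y}, L_S ∈ ℝ^{n×d_S}, Z_O ∈ ℝ^{n×r'}, and set K_Y = L_Y L_Yᵀ, K_S = L_S L_Sᵀ, B = Lᵀ (H K_Y H − τ·H K_S H + τ_z·H Z_O Z_Oᵀ H) L, C = (1/n)·Lᵀ H L + γ·I_d, and M = C^{-1/2} B C^{-1/2}. Then the supremum of ‖Θ K H L_Y‖_F² − τ·‖Θ K H L_S‖_F² + τ_z·‖Θ K H Z_O‖_F² over all Θ ∈ ℝ^{r×n} satisfying (1/n)·Θ K H K Θᵀ + γ·Θ K Θᵀ = I_r equals Σ_{j=1}^r λ_j(M), the sum of the r largest eigenvalues of M, and this supremum is attained by some Θ. -/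

import Mathlib

/-!
Substituting `A = Θ L`, the constraint reads `A C Aᵀ = 1` and the objective `tr (A B Aᵀ)`;
with `W = A C^{1/2}` the problem becomes maximizing `tr (W M Wᵀ)` over `W` with orthonormal
rows, and every `W` arises from some `Θ` because `L` has full column rank. In an eigenbasis
of `M`, `tr (W M Wᵀ) = ∑ λᵢ pᵢ` where `pᵢ` is the diagonal of the orthogonal projection `WᵀW`,
so `0 ≤ pᵢ ≤ 1` and `∑ pᵢ = r`; such a weighted sum is at most the sum of the `r` largest
`λᵢ` (Ky Fan), with equality when the rows of `W` are the corresponding eigenvectors.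
-/

open Matrix BigOperators

/-- The centering matrix `H = I_n - (1/n) 1_n 1_nᵀ`. -/
noncomputable def centering (n : ℕ) : Matrix (Fin n) (Fin n) ℝ :=
  1 - (n : ℝ)⁻¹ • Matrix.of (fun _ _ => (1 : ℝ))

/-- The squared Frobenius norm `‖M‖_F² = ∑ᵢⱼ Mᵢⱼ²`. -/
noncomputable def frobSq {m n : ℕ} (M : Matrix (Fin m) (Fin n) ℝ) : ℝ :=
  ∑ i, ∑ j, (M i j) ^ 2

/-- The old Mathlib `Matrix.PosSemidef.sqrt` (Dec 2024), spelled out. -/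
noncomputable def psdSqrtOld {d : ℕ} {C : Matrix (Fin d) (Fin d) ℝ} (hC : C.IsHermitian) :
    Matrix (Fin d) (Fin d) ℝ :=
  hC.eigenvectorUnitary.1 * diagonal (Real.sqrt ∘ hC.eigenvalues) *
    (star hC.eigenvectorUnitary : Matrix (Fin d) (Fin d) ℝ)

lemma exists_antitone_threshold {d : ℕ} {μ : Fin d → ℝ} (hμ : Antitone μ) (r : ℕ) :
    ∃ c, ∀ i : Fin d, ((i : ℕ) < r → c ≤ μ i) ∧ (r ≤ (i : ℕ) → μ i ≤ c) := by
  by_cases hr : r < d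
  · exact ⟨μ ⟨r, hr⟩, fun i => ⟨fun hi => hμ (Fin.le_def.2 hi.le),
      fun hi => hμ (Fin.le_def.2 hi)⟩⟩
  · obtain ⟨c, hc⟩ := (Set.finite_range μ).bddBelow
    exact ⟨c, fun i => ⟨fun _ => hc ⟨i, rfl⟩, fun hi => absurd (hi.trans_lt i.2) hr⟩⟩

lemma sum_castLE_eq_sum_mul_indicator {d r : ℕ} (hrd : r ≤ d) (f : Fin d → ℝ) :
    ∑ j : Fin r, f (Fin.castLE hrd j) = ∑ i, f i * if (i : ℕ) < r then 1 else 0 := by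
  simp only [mul_ite, mul_one, mul_zero]
  have himage : Finset.univ.filter (fun i : Fin d => (i : ℕ) < r)
      = Finset.univ.map (Fin.castLEEmb hrd) := by
    ext i
    simp only [Finset.mem_filter, Finset.mem_univ, true_and, Finset.mem_map, Fin.castLEEmb_apply]
    exact ⟨fun hi => ⟨⟨i, hi⟩, rfl⟩, fun ⟨j, hj⟩ => hj ▸ j.2⟩
  rw [← Finset.sum_filter, himage, Finset.sum_map]
  rfl

lemma sum_mul_le_sum_castLE {d r : ℕ} (hrd : r ≤ d) {μ t : Fin d → ℝ} (hμ : Antitone μ)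
    (ht : ∀ i, t i ∈ Set.Icc 0 1) (hts : ∑ i, t i = r) :
    ∑ i, μ i * t i ≤ ∑ j : Fin r, μ (Fin.castLE hrd j) := by
  set e : Fin d → ℝ := fun i => if (i : ℕ) < r then 1 else 0 with he
  obtain ⟨c, hc⟩ := exists_antitone_threshold hμ r
  have hle : ∀ i, (μ i - c) * (t i - e i) ≤ 0 := by
    intro i
    by_cases hi : (i : ℕ) < r
    · simp only [he, if_pos hi]
      exact mul_nonpos_of_nonneg_of_nonpos (sub_nonneg.2 ((hc i).1 hi)) (sub_nonpos.2 (ht i).2)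
    · simp only [he, if_neg hi, sub_zero]
      exact mul_nonpos_of_nonpos_of_nonneg (sub_nonpos.2 ((hc i).2 (not_lt.1 hi))) (ht i).1
  have he_sum : ∑ i, e i = r := by
    have h := sum_castLE_eq_sum_mul_indicator hrd fun _ => (1 : ℝ)
    simp only [one_mul, Finset.sum_const, Finset.card_univ, Fintype.card_fin, nsmul_one] at h
    exact h.symm
  have hdiff : ∑ i, μ i * t i - ∑ j : Fin r, μ (Fin.castLE hrd j)
      = ∑ i, (μ i - c) * (t i - e i) := by
    simp only [sum_castLE_eq_sum_mul_indicator hrd μ, sub_mul, mul_sub, Finset.sum_sub_distrib,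
      ← Finset.mul_sum, hts, he_sum]
    ring
  linarith [Finset.sum_nonpos fun i (_ : i ∈ Finset.univ) => hle i]

lemma diag_transpose_mul_self_nonneg {m n : Type*} [Fintype m] (X : Matrix m n ℝ) (i : n) :
    0 ≤ (Xᵀ * X) i i :=
  Finset.sum_nonneg fun k _ => mul_self_nonneg (X k i)

lemma diag_transpose_mul_self_mem_Icc {m n : Type*} [Fintype m] [Fintype n] [DecidableEq m]
    [DecidableEq n] {V : Matrix m n ℝ} (hV : V * Vᵀ = 1) (i : n) : (Vᵀ * V) i i ∈ Set.Icc 0 1 := by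
  have hproj : (1 - Vᵀ * V)ᵀ * (1 - Vᵀ * V) = 1 - Vᵀ * V := by
    have hP : Vᵀ * V * (Vᵀ * V) = Vᵀ * V := by
      rw [Matrix.mul_assoc, ← Matrix.mul_assoc V, hV, Matrix.one_mul]
    rw [transpose_sub, transpose_one, transpose_mul, transpose_transpose, sub_mul, mul_sub,
      mul_sub, hP]
    simp
  refine ⟨diag_transpose_mul_self_nonneg V i, ?_⟩
  have := diag_transpose_mul_self_nonneg (1 - Vᵀ * V) i
  rw [hproj, Matrix.sub_apply, one_apply_eq] at this
  linarith

lemma trace_transpose_mul_self {m n : Type*} [Fintype m] [Fintype n] [DecidableEq m]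
    {V : Matrix m n ℝ} (hV : V * Vᵀ = 1) : trace (Vᵀ * V) = Fintype.card m := by
  rw [trace_mul_comm, hV, trace_one]

namespace Matrix.IsHermitian
variable {n : Type*} [Fintype n] [DecidableEq n] {M : Matrix n n ℝ} (hM : M.IsHermitian)

lemma eigenvectorUnitary_mul_transpose :
    (hM.eigenvectorUnitary : Matrix n n ℝ) * (hM.eigenvectorUnitary : Matrix n n ℝ)ᵀ = 1 := by
  simpa [star_eq_conjTranspose, conjTranspose_eq_transpose_of_trivial] using
    mem_unitaryGroup_iff.mp hM.eigenvectorUnitary.2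

lemma transpose_eigenvectorUnitary_mul :
    (hM.eigenvectorUnitary : Matrix n n ℝ)ᵀ * (hM.eigenvectorUnitary : Matrix n n ℝ) = 1 := by
  simpa [star_eq_conjTranspose, conjTranspose_eq_transpose_of_trivial] using
    mem_unitaryGroup_iff'.mp hM.eigenvectorUnitary.2

lemma eq_eigenvectorUnitary_mul_diagonal_mul_transpose :
    M = (hM.eigenvectorUnitary : Matrix n n ℝ) * diagonal hM.eigenvalues *
      (hM.eigenvectorUnitary : Matrix n n ℝ)ᵀ := by
  simpa [Unitary.conjStarAlgAut_apply, star_eq_conjTranspose,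
    conjTranspose_eq_transpose_of_trivial] using hM.spectral_theorem

end Matrix.IsHermitian

lemma trace_mul_diagonal_mul_transpose {m n : Type*} [Fintype m] [Fintype n] [DecidableEq n]
    (V : Matrix m n ℝ) (e : n → ℝ) :
    trace (V * diagonal e * Vᵀ) = ∑ i, e i * (Vᵀ * V) i i := by
  rw [trace_mul_comm, ← Matrix.mul_assoc]
  simp only [trace, diag, mul_diagonal]
  exact Finset.sum_congr rfl fun i _ => mul_comm _ _

section KyFan
variable {d r : ℕ} {M : Matrix (Fin d) (Fin d) ℝ} (hM : M.IsHermitian) {μ : Fin d → ℝ}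
  {σ : Equiv.Perm (Fin d)} (hrd : r ≤ d)

theorem trace_mul_mul_transpose_le_sum_castLE (hσ : ∀ i, μ i = hM.eigenvalues (σ i))
    (hμ : Antitone μ) {W : Matrix (Fin r) (Fin d) ℝ} (hW : W * Wᵀ = 1) :
    trace (W * M * Wᵀ) ≤ ∑ j : Fin r, μ (Fin.castLE hrd j) := by
  set U : Matrix (Fin d) (Fin d) ℝ := ↑hM.eigenvectorUnitary
  set P := (W * U)ᵀ * (W * U)
  have hWU : W * U * (W * U)ᵀ = 1 := by
    rw [transpose_mul, Matrix.mul_assoc, ← Matrix.mul_assoc U,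
      hM.eigenvectorUnitary_mul_transpose, Matrix.one_mul, hW]
  have htrace : trace (W * M * Wᵀ) = ∑ i, μ i * P (σ i) (σ i) := by
    calc trace (W * M * Wᵀ) = trace (W * U * diagonal hM.eigenvalues * (W * U)ᵀ) := by
          conv_lhs => rw [hM.eq_eigenvectorUnitary_mul_diagonal_mul_transpose]
          simp only [transpose_mul, Matrix.mul_assoc, U]
      _ = ∑ i, hM.eigenvalues i * P i i := trace_mul_diagonal_mul_transpose _ _
      _ = ∑ i, μ i * P (σ i) (σ i) := by
          simp only [hσ]
          exact (Equiv.sum_comp σ fun i => hM.eigenvalues i * P i i).symm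
  rw [htrace]
  refine sum_mul_le_sum_castLE hrd hμ (fun i => diag_transpose_mul_self_mem_Icc hWU (σ i)) ?_
  rw [Equiv.sum_comp σ (fun i => P i i)]
  have htr := trace_transpose_mul_self hWU
  rwa [Fintype.card_fin] at htr

theorem exists_trace_mul_mul_transpose_eq_sum_castLE
    (hσ : ∀ i, μ i = hM.eigenvalues (σ i)) :
    ∃ W : Matrix (Fin r) (Fin d) ℝ, W * Wᵀ = 1 ∧
      trace (W * M * Wᵀ) = ∑ j : Fin r, μ (Fin.castLE hrd j) := by
  set U : Matrix (Fin d) (Fin d) ℝ := ↑hM.eigenvectorUnitary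
  set f : Fin r ↪ Fin d := (Fin.castLEEmb hrd).trans σ.toEmbedding
  refine ⟨Uᵀ.submatrix f id, ?_, ?_⟩
  · rw [transpose_submatrix, transpose_transpose, ← submatrix_mul _ _ _ _ _ Function.bijective_id,
      hM.transpose_eigenvectorUnitary_mul, submatrix_one_embedding]
  · have hdiag : Uᵀ * M * U = diagonal hM.eigenvalues := by
      conv_lhs => rw [hM.eq_eigenvectorUnitary_mul_diagonal_mul_transpose]
      simp only [← Matrix.mul_assoc, hM.transpose_eigenvectorUnitary_mul, U, Matrix.one_mul]
      rw [Matrix.mul_assoc, hM.transpose_eigenvectorUnitary_mul, Matrix.mul_one]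
    rw [transpose_submatrix, transpose_transpose, ← submatrix_id_id M,
      ← submatrix_mul _ _ _ _ _ Function.bijective_id,
      ← submatrix_mul _ _ _ _ _ Function.bijective_id, hdiag, submatrix_diagonal_embedding,
      trace_diagonal]
    exact Finset.sum_congr rfl fun j _ => (hσ _).symm

end KyFan

lemma frobSq_eq_trace {m k : ℕ} (X : Matrix (Fin m) (Fin k) ℝ) :
    frobSq X = trace (X * Xᵀ) := by
  simp [frobSq, trace, mul_apply, sq]

lemma centering_transpose (n : ℕ) : (centering n)ᵀ = centering n := by
  ext i j
  simp [centering, transpose_apply, one_apply, eq_comm]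

lemma frobSq_mul_gram_mul {n d r k : ℕ} (Θ : Matrix (Fin r) (Fin n) ℝ)
    (L : Matrix (Fin n) (Fin d) ℝ) {H : Matrix (Fin n) (Fin n) ℝ} (hH : Hᵀ = H)
    (N : Matrix (Fin n) (Fin k) ℝ) :
    frobSq (Θ * (L * Lᵀ) * H * N) = trace (Θ * L * (Lᵀ * (H * (N * Nᵀ) * H) * L) * (Θ * L)ᵀ) := by
  simp only [frobSq_eq_trace, transpose_mul, hH, Matrix.mul_assoc, transpose_transpose]

lemma psdSqrtOld_transpose {d : ℕ} {C : Matrix (Fin d) (Fin d) ℝ} (hC : C.IsHermitian) :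
    (psdSqrtOld hC)ᵀ = psdSqrtOld hC := by
  simp [psdSqrtOld, transpose_mul, star_eq_conjTranspose, conjTranspose_eq_transpose_of_trivial,
    Matrix.mul_assoc]

lemma psdSqrtOld_mul_self {d : ℕ} {C : Matrix (Fin d) (Fin d) ℝ} (hC : C.PosSemidef) :
    psdSqrtOld hC.1 * psdSqrtOld hC.1 = C := by
  set U : Matrix (Fin d) (Fin d) ℝ := ↑hC.1.eigenvectorUnitary
  have hroot : diagonal (Real.sqrt ∘ hC.1.eigenvalues) * diagonal (Real.sqrt ∘ hC.1.eigenvalues)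
      = diagonal hC.1.eigenvalues := by
    rw [diagonal_mul_diagonal]
    exact congrArg diagonal (funext fun i => Real.mul_self_sqrt (hC.eigenvalues_nonneg i))
  calc psdSqrtOld hC.1 * psdSqrtOld hC.1
      = U * (diagonal (Real.sqrt ∘ hC.1.eigenvalues) * (Uᵀ * U)
          * diagonal (Real.sqrt ∘ hC.1.eigenvalues)) * Uᵀ := by
        simp [psdSqrtOld, U, Matrix.mul_assoc, star_eq_conjTranspose,
          conjTranspose_eq_transpose_of_trivial]
    _ = C := by
        rw [hC.1.transpose_eigenvectorUnitary_mul, Matrix.mul_one, hroot,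
          ← hC.1.eq_eigenvectorUnitary_mul_diagonal_mul_transpose]

lemma isUnit_det_psdSqrtOld {d : ℕ} {C : Matrix (Fin d) (Fin d) ℝ} (hC : C.PosDef) :
    IsUnit (psdSqrtOld hC.isHermitian).det := by
  refine isUnit_iff_ne_zero.2 fun h => hC.det_pos.ne' ?_
  rw [← psdSqrtOld_mul_self hC.posSemidef, det_mul, h, zero_mul]

section Whitening
variable {m n R : Type*} [Fintype n] [CommRing R] {S : Matrix n n R} (A : Matrix m n R)

lemma mul_mul_transpose_eq_of_mul_self_eq (hS : Sᵀ = S) {C : Matrix n n R} (hSC : S * S = C) :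
    A * C * Aᵀ = A * S * (A * S)ᵀ := by
  rw [transpose_mul, hS, ← hSC]
  simp only [Matrix.mul_assoc]

lemma mul_mul_inv_mul_inv_mul_transpose [DecidableEq n] (hS : Sᵀ = S) (hSu : IsUnit S.det)
    (B : Matrix n n R) :
    A * S * (S⁻¹ * B * S⁻¹) * (A * S)ᵀ = A * B * Aᵀ := by
  rw [transpose_mul, hS]
  calc A * S * (S⁻¹ * B * S⁻¹) * (S * Aᵀ) = A * ((S * S⁻¹) * B * (S⁻¹ * S)) * Aᵀ := by
        simp only [Matrix.mul_assoc]
    _ = A * B * Aᵀ := by rw [mul_nonsing_inv S hSu, nonsing_inv_mul S hSu, Matrix.one_mul,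
        Matrix.mul_one]

end Whitening

lemma exists_mul_eq_of_rank_eq_card {R : Type*} [Field R] [LinearOrder R] [IsStrictOrderedRing R]
    {m n k : Type*} [Fintype m] [Fintype n] [DecidableEq n] {L : Matrix m n R}
    (hL : L.rank = Fintype.card n) (A : Matrix k n R) : ∃ Θ : Matrix k m R, Θ * L = A := by
  have hG : IsUnit (Lᵀ * L) := by
    refine mulVec_surjective_iff_isUnit.mp (LinearMap.range_eq_top (f := (Lᵀ * L).mulVecLin).mp ?_)
    apply Submodule.eq_top_of_finrank_eq
    rw [← rank, rank_transpose_mul_self, hL, Module.finrank_fintype_fun_eq_card]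
  refine ⟨A * (Lᵀ * L)⁻¹ * Lᵀ, ?_⟩
  rw [Matrix.mul_assoc, Matrix.mul_assoc,
    nonsing_inv_mul _ ((isUnit_iff_isUnit_det _).mp hG), Matrix.mul_one]

theorem stmt_10_general (n d r dY dS r' : ℕ) (hrd : r ≤ d)
    (L : Matrix (Fin n) (Fin d) ℝ) (hL : L.rank = d)
    (γ : ℝ) (τ τz : ℝ)
    (LY : Matrix (Fin n) (Fin dY) ℝ) (LS : Matrix (Fin n) (Fin dS) ℝ)
    (ZO : Matrix (Fin n) (Fin r') ℝ)
    (K : Matrix (Fin n) (Fin n) ℝ) (hK : K = L * Lᵀ)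
    (KY : Matrix (Fin n) (Fin n) ℝ) (hKY : KY = LY * LYᵀ)
    (KS : Matrix (Fin n) (Fin n) ℝ) (hKS : KS = LS * LSᵀ)
    (B : Matrix (Fin d) (Fin d) ℝ)
    (hB : B = Lᵀ * (centering n * KY * centering n - τ • (centering n * KS * centering n)
        + τz • (centering n * (ZO * ZOᵀ) * centering n)) * L)
    (C : Matrix (Fin d) (Fin d) ℝ)
    (hC : C = (n : ℝ)⁻¹ • (Lᵀ * centering n * L) + γ • (1 : Matrix (Fin d) (Fin d) ℝ))
    (hCpd : C.PosDef)
    (M : Matrix (Fin d) (Fin d) ℝ)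
    (hMdef : M = (psdSqrtOld hCpd.posSemidef.1)⁻¹ * B * (psdSqrtOld hCpd.posSemidef.1)⁻¹)
    (hM : M.IsHermitian)
    (μ : Fin d → ℝ) (hμ : Antitone μ)
    (hperm : ∃ σ : Equiv.Perm (Fin d), ∀ i, μ i = hM.eigenvalues (σ i)) :
    IsGreatest
      {x : ℝ | ∃ Θ : Matrix (Fin r) (Fin n) ℝ,
        ((n : ℝ)⁻¹ • (Θ * K * centering n * K * Θᵀ) + γ • (Θ * K * Θᵀ)
            = (1 : Matrix (Fin r) (Fin r) ℝ)) ∧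
        x = frobSq (Θ * K * centering n * LY) - τ * frobSq (Θ * K * centering n * LS)
              + τz * frobSq (Θ * K * centering n * ZO)}
      (∑ j : Fin r, μ (Fin.castLE hrd j)) := by
  obtain ⟨σ, hσ⟩ := hperm
  set S := psdSqrtOld hCpd.posSemidef.1
  have hS : Sᵀ = S := psdSqrtOld_transpose _
  have hSu : IsUnit S.det := isUnit_det_psdSqrtOld hCpd
  have hconstr : ∀ Θ : Matrix (Fin r) (Fin n) ℝ,
      (n : ℝ)⁻¹ • (Θ * K * centering n * K * Θᵀ) + γ • (Θ * K * Θᵀ)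
        = Θ * L * S * (Θ * L * S)ᵀ := fun Θ => by
    rw [← mul_mul_transpose_eq_of_mul_self_eq _ hS (psdSqrtOld_mul_self hCpd.posSemidef), hC, hK]
    simp only [Matrix.mul_add, Matrix.add_mul, Matrix.mul_smul, Matrix.smul_mul, Matrix.mul_one,
      transpose_mul, Matrix.mul_assoc]
  have hobj : ∀ Θ : Matrix (Fin r) (Fin n) ℝ,
      frobSq (Θ * K * centering n * LY) - τ * frobSq (Θ * K * centering n * LS)
        + τz * frobSq (Θ * K * centering n * ZO)
        = trace (Θ * L * S * M * (Θ * L * S)ᵀ) := fun Θ => by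
    rw [hMdef, mul_mul_inv_mul_inv_mul_transpose _ hS hSu, hB, hK, hKY, hKS]
    simp only [frobSq_mul_gram_mul Θ L (centering_transpose n), Matrix.mul_sub, Matrix.sub_mul,
      Matrix.mul_add, Matrix.add_mul, Matrix.mul_smul, Matrix.smul_mul, trace_add, trace_sub,
      trace_smul, smul_eq_mul]
  refine ⟨?_, ?_⟩
  · obtain ⟨W, hW, htrace⟩ := exists_trace_mul_mul_transpose_eq_sum_castLE hM hrd hσ
    obtain ⟨Θ, hΘ⟩ := exists_mul_eq_of_rank_eq_card (by rwa [Fintype.card_fin]) (W * S⁻¹)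
    have hΘS : Θ * L * S = W := by rw [hΘ, Matrix.mul_assoc, nonsing_inv_mul S hSu, Matrix.mul_one]
    exact ⟨Θ, by rw [hconstr, hΘS, hW], by rw [hobj, hΘS, htrace]⟩
  · rintro x ⟨Θ, hΘ, rfl⟩
    rw [hobj]
    exact trace_mul_mul_transpose_le_sum_castLE hM hrd hσ hμ (by rw [← hconstr, hΘ])

/-- Theorem 1: the supremum of the debiasing objective over the disentanglement
constraint set equals the sum of the `r` largest eigenvalues of
`M = C^{-1/2} B C^{-1/2}` (the solutions of the generalized eigenvalue problem
`B u = λ C u`), and it is attained. -/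
theorem stmt_10 (n d r dY dS r' : ℕ) (hr : 1 ≤ r) (hrd : r ≤ d) (hdn : d ≤ n)
    (L : Matrix (Fin n) (Fin d) ℝ) (hL : L.rank = d)
    (γ : ℝ) (hγ : 0 < γ) (τ τz : ℝ)
    (LY : Matrix (Fin n) (Fin dY) ℝ) (LS : Matrix (Fin n) (Fin dS) ℝ)
    (ZO : Matrix (Fin n) (Fin r') ℝ)
    (K : Matrix (Fin n) (Fin n) ℝ) (hK : K = L * Lᵀ)
    (KY : Matrix (Fin n) (Fin n) ℝ) (hKY : KY = LY * LYᵀ)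
    (KS : Matrix (Fin n) (Fin n) ℝ) (hKS : KS = LS * LSᵀ)
    (B : Matrix (Fin d) (Fin d) ℝ)
    (hB : B = Lᵀ * (centering n * KY * centering n - τ • (centering n * KS * centering n)
        + τz • (centering n * (ZO * ZOᵀ) * centering n)) * L)
    (C : Matrix (Fin d) (Fin d) ℝ)
    (hC : C = (n : ℝ)⁻¹ • (Lᵀ * centering n * L) + γ • (1 : Matrix (Fin d) (Fin d) ℝ))
    (hCpd : C.PosDef)
    (M : Matrix (Fin d) (Fin d) ℝ)
    (hMdef : M = (psdSqrtOld hCpd.posSemidef.1)⁻¹ * B * (psdSqrtOld hCpd.posSemidef.1)⁻¹)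
    (hM : M.IsHermitian)
    (μ : Fin d → ℝ) (hμ : Antitone μ)
    (hperm : ∃ σ : Equiv.Perm (Fin d), ∀ i, μ i = hM.eigenvalues (σ i)) :
    IsGreatest
      {x : ℝ | ∃ Θ : Matrix (Fin r) (Fin n) ℝ,
        ((n : ℝ)⁻¹ • (Θ * K * centering n * K * Θᵀ) + γ • (Θ * K * Θᵀ)
            = (1 : Matrix (Fin r) (Fin r) ℝ)) ∧
        x = frobSq (Θ * K * centering n * LY) - τ * frobSq (Θ * K * centering n * LS)
              + τz * frobSq (Θ * K * centering n * ZO)}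
      (∑ j : Fin r, μ (Fin.castLE hrd j)) :=
  stmt_10_general n d r dY dS r' hrd L hL γ τ τz LY LS ZO K hK KY hKY KS hKS B hB C hC hCpd M hMdef
    hM μ hμ hperm
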